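/- arXiv:1910.04085 — 2 statements merged into one kernel-verified Lean document; each statement's English description precedes it below -/
import Mathlib

section
/- Let j ≥ 1 and x_1, …, x_j ∈ C([0,1]) be fixed. Then the map x ↦ λ(conv(graph({x_1, …, x_j, x}))) is continuous from (C([0,1]), ‖·‖_∞) to ℝ. -/
open MeasureTheory Filter Topology
open scoped ENNReal

noncomputable section

abbrev I01 : Set ℝ := Set.Icc 0 1

abbrev CI := C(I01, ℝ)

noncomputable instance : MeasurableSpace CI := borel CI
instance : BorelSpace CI := ⟨rfl⟩

/-- The graph of a continuous function on `[0,1]`, as a subset of `ℝ²`. -/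
def graph (x : CI) : Set (ℝ × ℝ) := Set.range fun t : I01 => ((t : ℝ), x t)

/-- The area (2-dimensional Lebesgue measure) of the convex hull of a set in `ℝ²`. -/
def ach (A : Set (ℝ × ℝ)) : ℝ := (volume (convexHull ℝ A)).toReal

/-- Ratio of the area of the convex hull of the graphs of a batch of curves to the area of
the convex hull once `x` is added (`0/0 = 0` convention, as division by zero is zero). -/
def achRatio {m : ℕ} (xs : Fin m → CI) (x : CI) : ℝ :=
  ach (⋃ i, graph (xs i)) / ach ((⋃ i, graph (xs i)) ∪ graph x)

/-- The ACH depth of degree `J` of `x` w.r.t. `P`. -/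
def ACHDepth (J : ℕ) (P : Measure CI) (x : CI) : ℝ :=
  ∫ xs, achRatio xs x ∂(Measure.pi fun _ : Fin J => P)

/-- The average ACH depth of degree `J`. -/
def avgACHDepth (J : ℕ) (P : Measure CI) (x : CI) : ℝ :=
  (J : ℝ)⁻¹ * ∑ j ∈ Finset.Icc 1 J, ACHDepth j P x

/-- A curve is non-constant. -/
def Nonconstant (x : CI) : Prop := ¬ ∃ c : ℝ, ∀ t, x t = c

/-- The empirical ACH depth (`U`-statistic of degree `J`) based on the first `n` curves. -/
def empDepth (J n : ℕ) (X : ℕ → CI) (x : CI) : ℝ :=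
  (n.choose J : ℝ)⁻¹ * ∑ s ∈ Finset.powersetCard J (Finset.range n),
    ach (⋃ i ∈ s, graph (X i)) / ach ((⋃ i ∈ s, graph (X i)) ∪ graph x)

/-- The average empirical ACH depth. -/
def avgEmpDepth (J n : ℕ) (X : ℕ → CI) (x : CI) : ℝ :=
  (J : ℝ)⁻¹ * ∑ j ∈ Finset.Icc 1 J, empDepth j n X x

/-- The band delimited by a finite family of curves. -/
def band {m : ℕ} (xs : Fin m → CI) : Set (ℝ × ℝ) :=
  {p | ∃ t : I01, p.1 = (t : ℝ) ∧ (⨅ i, xs i t) ≤ p.2 ∧ p.2 ≤ ⨆ i, xs i t}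

/-! Let `K x` be the closed convex hull of the graphs of `x₁, …, x_j, x`; taking the closure does
not change the area because the frontier of a convex set is null. If `‖y - x‖ ≤ ε`, then `K y`
lies in the closed `ε`-thickening of `K x` and vice versa. The first inclusion bounds the area of
`K y` from above by that of the `ε`-thickening of the compact set `K x`, which tends to the area
of `K x`. For the lower bound, Hahn–Banach separation shows that a closed convex set whose
`ε`-thickening contains the ball of radius `2ε` around `p` must contain `p`; hence `K y` contains
`{p | closedBall p (2ε) ⊆ K x}`, whose area tends to that of the interior of `K x`. -/

open Metric

section NormedSpace

variable {E : Type*} [NormedAddCommGroup E] [NormedSpace ℝ E]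

theorem ContinuousLinearMap.apply_le_of_mem_cthickening (f : StrongDual ℝ E) {C : Set E}
    {u ε : ℝ} {q : E} (hfC : ∀ a ∈ C, f a ≤ u) (hε : 0 ≤ ε) (hq : q ∈ cthickening ε C) :
    f q ≤ u + ‖f‖ * ε := by
  have hC : C.Nonempty := by
    rw [Set.nonempty_iff_ne_empty]
    rintro rfl
    simp at hq
  have : Nonempty C := hC.to_subtype
  have hdist : infDist q C ≤ ε := ENNReal.toReal_le_of_le_ofReal hε (mem_cthickening_iff.1 hq)
  have hinf : f q - u ≤ ‖f‖ * infDist q C := by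
    rw [infDist_eq_iInf, Real.mul_iInf_of_nonneg (norm_nonneg f)]
    refine le_ciInf fun a => ?_
    calc f q - u ≤ f q - f a := by linarith [hfC a a.2]
      _ = f (q - a) := (map_sub f q a).symm
      _ ≤ ‖f‖ * ‖q - a‖ := (le_abs_self _).trans (f.le_opNorm _)
      _ = ‖f‖ * dist q a := by rw [dist_eq_norm]
  calc f q ≤ u + ‖f‖ * infDist q C := by linarith
    _ ≤ u + ‖f‖ * ε := by gcongr

theorem Convex.mem_of_closedBall_subset_cthickening {C : Set E} (hC : Convex ℝ C)
    (hCc : IsClosed C) {ε : ℝ} (hε : 0 < ε) {p : E}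
    (hp : closedBall p (2 * ε) ⊆ Metric.cthickening ε C) : p ∈ C := by
  by_contra hpC
  obtain ⟨f, u, hfC, hfp⟩ := geometric_hahn_banach_closed_point hC hCc hpC
  have hf : 0 < ‖f‖ := by
    refine norm_pos_iff.2 fun hf0 => ?_
    obtain ⟨a, ha⟩ : C.Nonempty := by
      rw [Set.nonempty_iff_ne_empty]
      rintro rfl
      simpa using hp (mem_closedBall_self (by positivity))
    simpa [hf0] using (hfC a ha).trans hfp
  obtain ⟨v, hv, hfv⟩ := f.exists_lt_apply_of_lt_opNorm (half_lt_self hf)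
  obtain ⟨w, hw, hfw⟩ : ∃ w : E, ‖w‖ < 1 ∧ ‖f‖ / 2 < f w := by
    rcases le_total 0 (f v) with h | h
    · exact ⟨v, hv, by rwa [Real.norm_eq_abs, abs_of_nonneg h] at hfv⟩
    · exact ⟨-v, by rwa [norm_neg], by rwa [Real.norm_eq_abs, abs_of_nonpos h, ← map_neg] at hfv⟩
  have hq : p + (2 * ε) • w ∈ closedBall p (2 * ε) := by
    rw [mem_closedBall, dist_self_add_left, norm_smul, Real.norm_of_nonneg (by positivity)]
    exact mul_le_of_le_one_right (by positivity) hw.le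
  have := f.apply_le_of_mem_cthickening (fun a ha => (hfC a ha).le) hε.le (hp hq)
  rw [map_add, map_smul, smul_eq_mul] at this
  nlinarith

theorem closure_convexHull_subset_cthickening {S T : Set E} {ε : ℝ} (h : S ⊆ cthickening ε T) :
    closure (convexHull ℝ S) ⊆ cthickening ε (closure (convexHull ℝ T)) := by
  rw [cthickening_closure]
  refine closure_minimal (convexHull_min ?_ ((convex_convexHull ℝ T).cthickening ε))
    isClosed_cthickening
  exact h.trans (cthickening_subset_of_subset ε (subset_convexHull ℝ T))

end NormedSpace

theorem exists_pos_lt_measure_setOf_closedBall_subset {X : Type*} [PseudoMetricSpace X]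
    [MeasurableSpace X] {μ : Measure X} {K : Set X} {a : ℝ≥0∞} (ha : a < μ (interior K)) :
    ∃ r > 0, a < μ {p | closedBall p r ⊆ K} := by
  set S : ℕ → Set X := fun n => {p | closedBall p (1 / (n + 1)) ⊆ K}
  have hS : Monotone S := fun m n hmn p hp =>
    (closedBall_subset_closedBall (Nat.one_div_le_one_div hmn)).trans hp
  have hint : interior K ⊆ ⋃ n, S n := fun p hp => by
    obtain ⟨n, -, hn⟩ :=
      nhds_basis_closedBall_inv_nat_succ.mem_iff.1 (mem_interior_iff_mem_nhds.1 hp)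
    exact Set.mem_iUnion.2 ⟨n, hn⟩
  obtain ⟨n, hn⟩ := lt_iSup_iff.1 ((ha.trans_le (measure_mono hint)).trans_eq hS.measure_iUnion)
  exact ⟨1 / (n + 1), Nat.one_div_pos_of_nat, hn⟩

section AddHaar

variable {E : Type*} [NormedAddCommGroup E] [NormedSpace ℝ E] [MeasurableSpace E] [BorelSpace E]
  [FiniteDimensional ℝ E] (μ : Measure E) [μ.IsAddHaarMeasure]

theorem tendsto_addHaar_of_forall_subset_cthickening {ι : Type*} {l : Filter ι}
    {K : ι → Set E} {K₀ : Set E} (hK : ∀ i, Convex ℝ (K i)) (hKc : ∀ i, IsClosed (K i))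
    (hK₀ : Convex ℝ K₀) (hK₀c : IsCompact K₀)
    (h : ∀ ε > 0, ∀ᶠ i in l, K i ⊆ cthickening ε K₀ ∧ K₀ ⊆ cthickening ε (K i)) :
    Tendsto (fun i => μ (K i)) l (𝓝 (μ K₀)) := by
  refine tendsto_order.2 ⟨fun a ha => ?_, fun b hb => ?_⟩
  · rw [← measure_interior_of_null_frontier (hK₀.addHaar_frontier μ)] at ha
    obtain ⟨r, hr, har⟩ := exists_pos_lt_measure_setOf_closedBall_subset ha
    filter_upwards [h (r / 2) (half_pos hr)] with i hi
    refine har.trans_le (measure_mono fun p hp => ?_)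
    refine (hK i).mem_of_closedBall_subset_cthickening (hKc i) (half_pos hr) ?_
    rw [mul_div_cancel₀ r two_ne_zero]
    exact hp.trans hi.2
  · obtain ⟨ε, hε, hεb⟩ :=
      ((tendsto_measure_cthickening_of_isCompact hK₀c).eventually (gt_mem_nhds hb)).exists_gt
    filter_upwards [h ε hε] with i hi
    exact (measure_mono hi.1).trans_lt hεb

theorem tendsto_addHaar_convexHull_of_forall_subset_cthickening {ι : Type*} {l : Filter ι}
    {S : ι → Set E} {S₀ : Set E} (hS₀ : Bornology.IsBounded S₀)
    (h : ∀ ε > 0, ∀ᶠ i in l, S i ⊆ cthickening ε S₀ ∧ S₀ ⊆ cthickening ε (S i)) :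
    Tendsto (fun i => μ (convexHull ℝ (S i))) l (𝓝 (μ (convexHull ℝ S₀))) := by
  simp_rw [← measure_closure_of_null_frontier ((convex_convexHull ℝ _).addHaar_frontier μ)]
  refine tendsto_addHaar_of_forall_subset_cthickening μ (fun i => (convex_convexHull ℝ _).closure)
    (fun i => isClosed_closure) (convex_convexHull ℝ _).closure
    (isBounded_convexHull.2 hS₀).isCompact_closure fun ε hε => ?_
  filter_upwards [h ε hε] with i hi
  exact ⟨closure_convexHull_subset_cthickening hi.1, closure_convexHull_subset_cthickening hi.2⟩

end AddHaar

theorem isCompact_graph (x : CI) : IsCompact (graph x) :=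
  isCompact_range (by fun_prop)

theorem union_graph_subset_cthickening (A : Set (ℝ × ℝ)) {x y : CI} {ε : ℝ}
    (h : dist y x ≤ ε) : A ∪ graph y ⊆ cthickening ε (A ∪ graph x) := by
  rw [cthickening_union]
  refine Set.union_subset_union (self_subset_cthickening A) ?_
  rintro _ ⟨t, rfl⟩
  refine mem_cthickening_of_dist_le _ ((t : ℝ), x t) ε _ ⟨t, rfl⟩ ?_
  rw [Prod.dist_eq, dist_self]
  exact max_le (dist_nonneg.trans h) ((ContinuousMap.dist_apply_le_dist t).trans h)

theorem continuous_ach_insert_general (j : ℕ) (xs : Fin j → CI) :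
    Continuous fun x : CI => ach ((⋃ i, graph (xs i)) ∪ graph x) := by
  set A := ⋃ i, graph (xs i)
  refine continuous_iff_continuousAt.2 fun x₀ => ?_
  have hbdd : Bornology.IsBounded (A ∪ graph x₀) :=
    ((isCompact_iUnion fun i => isCompact_graph (xs i)).union (isCompact_graph x₀)).isBounded
  refine (ENNReal.tendsto_toReal (isBounded_convexHull.2 hbdd).measure_lt_top.ne).comp ?_
  refine tendsto_addHaar_convexHull_of_forall_subset_cthickening volume hbdd fun ε hε => ?_
  filter_upwards [closedBall_mem_nhds x₀ hε] with y hy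
  exact ⟨union_graph_subset_cthickening A hy,
    union_graph_subset_cthickening A (by rwa [mem_closedBall, dist_comm] at hy)⟩

/-- for fixed curves `x₁, …, x_j`, the map
`x ↦ λ(conv(graph({x₁, …, x_j, x})))` is continuous on `(C([0,1]), ‖·‖_∞)`. -/
theorem continuous_ach_insert (j : ℕ) (hj : 1 ≤ j) (xs : Fin j → CI) :
    Continuous fun x : CI => ach ((⋃ i, graph (xs i)) ∪ graph x) :=
  continuous_ach_insert_general j xs

end
end

section
/- Let z ≡ 0, c_1 ≡ 1, c_{−1} ≡ −1 be constant functions in C([0,1]) and P = (1/3)(δ_z + δ_{c_1} + δ_{c_{−1}}). Let y ≡ 3/2 be constant and define x ∈ C([0,1]) by x(t) = 4t for t ∈ [0,1/2] and x(t) = −4t+4 for t ∈ [1/2,1]. Then min{‖y−z‖_∞, ‖y−x‖_∞} > 0, max{‖y−z‖_∞, ‖y−x‖_∞} < ‖x−z‖_∞, and yet D̄_2(y, P) < D̄_2(x, P). In particular, the average ACH depth does not satisfy the 'decreasing with respect to the deepest point' property. -/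
open MeasureTheory Filter Topology
open scoped ENNReal

noncomputable section

/-!
Every convex hull that occurs is a "house" `house l q p`: the rectangle `[0,1] × [l,q]` topped
by a triangular roof with apex `(1/2, q + p/2)`, whose area is `q - l + p/4`. As `P` only
charges constant curves, `D₁ ≡ 0` and `D₂(f, P)` is `2/9` times the sum, over the three pairs of
atoms, of area(hull of the pair) / area(hull of the pair and `f`). The three pair hulls have
areas `1, 1, 2`; adding `y ≡ 3/2` they become `3/2, 5/2, 5/2`, adding the tent `x` they become
`3/2, 2, 5/2`, whence `D̄₂(y, P) = 28/135 < 59/270 = D̄₂(x, P)`.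
-/

open Set

theorem min_one_sub_mem_Icc {t : ℝ} (ht : t ∈ Icc 0 1) : min t (1 - t) ∈ Icc 0 (1/2) := by
  refine ⟨le_min ht.1 (by linarith [ht.2]), ?_⟩
  rcases le_total t (1/2) with h | h
  · exact (min_le_left _ _).trans h
  · exact (min_le_right _ _).trans (by linarith)

def house (l q p : ℝ) : Set (ℝ × ℝ) :=
  {z | z.1 ∈ Icc 0 1 ∧ z.2 ∈ Icc l (q + p * min z.1 (1 - z.1))}

theorem convex_house {l q p : ℝ} (hp : 0 ≤ p) : Convex ℝ (house l q p) := by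
  rintro ⟨s, u⟩ ⟨⟨hs0, hs1⟩, hul, huq⟩ ⟨t, v⟩ ⟨⟨ht0, ht1⟩, hvl, hvq⟩ a b ha hb hab
  simp only [mul_min_of_nonneg _ _ hp, ← min_add_add_left, le_min_iff] at huq hvq
  simp only [house, mem_ofPred_eq, Prod.smul_mk, Prod.mk_add_mk, smul_eq_mul, mem_Icc,
    mul_min_of_nonneg _ _ hp, ← min_add_add_left, le_min_iff]
  obtain rfl : b = 1 - a := by linarith
  exact ⟨⟨by nlinarith, by nlinarith⟩, by nlinarith, by nlinarith, by nlinarith⟩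

theorem house_subset_convexHull (l q p : ℝ) :
    house l q p ⊆ convexHull ℝ {(0, l), (1, l), (0, q), (1, q), (1/2, q + p/2)} := by
  set V : Set (ℝ × ℝ) := {(0, l), (1, l), (0, q), (1, q), (1/2, q + p/2)}
  have hC : Convex ℝ (convexHull ℝ V) := convex_convexHull ℝ V
  have along {x₀ y₀ x₁ y₁ s : ℝ} (h₀ : (x₀, y₀) ∈ convexHull ℝ V)
      (h₁ : (x₁, y₁) ∈ convexHull ℝ V) (hs : s ∈ Icc 0 1) :
      (x₀ + s * (x₁ - x₀), y₀ + s * (y₁ - y₀)) ∈ convexHull ℝ V := by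
    convert hC.lineMap_mem h₀ h₁ hs using 1
    simp [AffineMap.lineMap_apply, add_comm]
  have vertex (z : ℝ × ℝ) (hz : z ∈ V) : z ∈ convexHull ℝ V := subset_convexHull ℝ V hz
  rintro ⟨t, y⟩ ⟨⟨ht0, ht1⟩, hl, hy⟩
  have bottom : (t, l) ∈ convexHull ℝ V := by
    simpa using along (vertex (0, l) (by simp [V])) (vertex (1, l) (by simp [V])) (s := t)
      ⟨ht0, ht1⟩
  have roof : (t, q + p * min t (1 - t)) ∈ convexHull ℝ V := by
    rcases le_total t (1/2) with h | h
    · convert along (vertex (0, q) (by simp [V])) (vertex (1/2, q + p/2) (by simp [V]))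
        (s := 2 * t) ⟨by linarith, by linarith⟩ using 2
      · ring
      · rw [min_eq_left (by linarith)]; ring
    · convert along (vertex (1/2, q + p/2) (by simp [V])) (vertex (1, q) (by simp [V]))
        (s := 2 * t - 1) ⟨by linarith, by linarith⟩ using 2
      · ring
      · rw [min_eq_right (by linarith)]; ring
  refine hC.segment_subset bottom roof ?_
  rw [← Prod.image_mk_segment_right, segment_eq_Icc (hl.trans hy)]
  exact ⟨y, ⟨hl, hy⟩, rfl⟩

theorem volume_prod_setOf_mem_Icc {α : Type*} [MeasurableSpace α] {μ : Measure α} [SFinite μ]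
    {f g : α → ℝ} (hf : Measurable f) (hg : Measurable g) {s : Set α} (hs : MeasurableSet s) :
    μ.prod volume {z : α × ℝ | z.1 ∈ s ∧ z.2 ∈ Icc (f z.1) (g z.1)} =
      ∫⁻ x in s, ENNReal.ofReal (g x - f x) ∂μ := by
  classical
  rw [Measure.prod_apply (measurableSet_region_between_cc hf hg hs), ← lintegral_indicator hs]
  congr 1 with x
  by_cases hx : x ∈ s
  · rw [indicator_of_mem hx, ← Real.volume_Icc]
    congr 1 with y
    simp [hx]
  · simp [hx]

theorem integral_const_add_mul_id (a b c d : ℝ) :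
    ∫ t in a..b, (c + d * t) = c * (b - a) + d * (b ^ 2 - a ^ 2) / 2 := by
  rw [intervalIntegral.integral_add intervalIntegrable_const
    (intervalIntegral.intervalIntegrable_id.const_mul d), intervalIntegral.integral_const_mul,
    integral_id, intervalIntegral.integral_const, smul_eq_mul]
  ring

theorem integral_roof (l q p : ℝ) :
    ∫ t in (0 : ℝ)..1, (q + p * min t (1 - t) - l) = q - l + p / 4 := by
  have hi (a b : ℝ) : IntervalIntegrable (fun t => q + p * min t (1 - t) - l) volume a b :=
    (by fun_prop : Continuous _).intervalIntegrable a b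
  rw [← intervalIntegral.integral_add_adjacent_intervals (hi 0 (1/2)) (hi (1/2) 1),
    intervalIntegral.integral_congr (g := fun t => (q - l) + p * t),
    intervalIntegral.integral_congr (a := 1/2) (g := fun t => (q - l + p) + (-p) * t),
    integral_const_add_mul_id, integral_const_add_mul_id]
  · ring
  · intro t ht
    rw [uIcc_of_le (by norm_num)] at ht
    simp only [min_eq_right (by linarith [ht.1] : 1 - t ≤ t)]
    ring
  · intro t ht
    rw [uIcc_of_le (by norm_num)] at ht
    simp only [min_eq_left (by linarith [ht.2] : t ≤ 1 - t)]
    ring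

theorem volume_house {l q p : ℝ} (hp : 0 ≤ p) (hlq : l ≤ q) :
    volume (house l q p) = ENNReal.ofReal (q - l + p / 4) := by
  rw [Measure.volume_eq_prod]
  refine (volume_prod_setOf_mem_Icc (f := fun _ => l) (g := fun t => q + p * min t (1 - t))
    measurable_const (by fun_prop) measurableSet_Icc).trans ?_
  rw [← integral_roof l q p, ← ofReal_integral_eq_lintegral_ofReal,
    integral_Icc_eq_integral_Ioc, intervalIntegral.integral_of_le zero_le_one]
  · exact (by fun_prop : Continuous _).integrableOn_Icc
  · refine (ae_restrict_iff' measurableSet_Icc).2 (ae_of_all _ fun t ht => ?_)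
    have := (min_one_sub_mem_Icc ht).1
    simp only [Pi.zero_apply]
    nlinarith

theorem ach_eq_of_subset_house {A : Set (ℝ × ℝ)} {l q p : ℝ} (hp : 0 ≤ p) (hlq : l ≤ q)
    (hA : A ⊆ house l q p) (hv : {(0, l), (1, l), (0, q), (1, q), (1/2, q + p/2)} ⊆ A) :
    ach A = q - l + p / 4 := by
  have : convexHull ℝ A = house l q p :=
    (convexHull_min hA (convex_house hp)).antisymm
      ((house_subset_convexHull l q p).trans (convexHull_mono hv))
  rw [ach, this, volume_house hp hlq, ENNReal.toReal_ofReal (by linarith)]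

theorem mk_mem_graph_iff {f : CI} {t y : ℝ} :
    (t, y) ∈ graph f ↔ ∃ ht : t ∈ I01, f ⟨t, ht⟩ = y := by
  constructor
  · rintro ⟨s, hs⟩
    obtain ⟨rfl, rfl⟩ := Prod.mk.inj hs
    exact ⟨s.2, rfl⟩
  · rintro ⟨ht, rfl⟩
    exact ⟨⟨t, ht⟩, rfl⟩

theorem graph_subset_house {f : CI} {c k l q p : ℝ}
    (hf : ∀ t : I01, f t = c + k * min (t : ℝ) (1 - t)) (hk : 0 ≤ k) (hl : l ≤ c) (hc : c ≤ q)
    (hck : c + k / 2 ≤ q + p / 2) : graph f ⊆ house l q p := by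
  rintro _ ⟨t, rfl⟩
  obtain ⟨hm0, hm1⟩ := min_one_sub_mem_Icc t.2
  refine ⟨t.2, ?_, ?_⟩ <;> simp only [hf]
  · nlinarith
  -- both sides are affine in `min t (1 - t) ∈ [0, 1/2]`; `hc` and `hck` are the endpoint cases
  · nlinarith [mul_nonneg (by linarith : 0 ≤ 1 - 2 * min (t : ℝ) (1 - t))
      (by linarith : 0 ≤ q - c)]

theorem graph_const_subset_house {c l q p : ℝ} (hl : l ≤ c) (hc : c ≤ q) (hp : 0 ≤ p) :
    graph (ContinuousMap.const I01 c) ⊆ house l q p :=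
  graph_subset_house (k := 0) (by simp) le_rfl hl hc (by linarith)

theorem not_nonconstant_const (c : ℝ) : ¬ Nonconstant (ContinuousMap.const I01 c) :=
  fun h => h ⟨c, fun _ => rfl⟩

theorem ach_graph_eq_zero {u : CI} (hu : ¬ Nonconstant u) : ach (graph u) = 0 := by
  obtain ⟨c, hc⟩ := not_not.1 hu
  have := ach_eq_of_subset_house (A := graph u) (p := 0) le_rfl le_rfl
    (graph_subset_house (c := c) (k := 0) (by simpa using hc) le_rfl le_rfl le_rfl (by simp))
    (by norm_num [insert_subset_iff, mk_mem_graph_iff, hc])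
  simpa using this

theorem ach_graph_const_union_const {a b : ℝ} (hab : a ≤ b) :
    ach (graph (ContinuousMap.const I01 a) ∪ graph (ContinuousMap.const I01 b)) = b - a := by
  have := ach_eq_of_subset_house (p := 0) le_rfl hab
    (union_subset (graph_const_subset_house le_rfl hab le_rfl)
      (graph_const_subset_house hab le_rfl le_rfl))
    (by norm_num [insert_subset_iff, mk_mem_graph_iff])
  simpa using this

theorem ach_graph_const_union_const_union_const {a b c : ℝ} (hab : a ≤ b) (hbc : b ≤ c) :
    ach (graph (ContinuousMap.const I01 a) ∪ graph (ContinuousMap.const I01 b) ∪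
      graph (ContinuousMap.const I01 c)) = c - a := by
  have hac := hab.trans hbc
  have := ach_eq_of_subset_house (p := 0) le_rfl hac
    (union_subset (union_subset (graph_const_subset_house le_rfl hac le_rfl)
      (graph_const_subset_house hab hbc le_rfl)) (graph_const_subset_house hac le_rfl le_rfl))
    (by norm_num [insert_subset_iff, mk_mem_graph_iff])
  simpa using this

theorem ach_graph_const_union_const_union_tent {a b : ℝ} {x : CI}
    (hx : ∀ t : I01, x t = 4 * min (t : ℝ) (1 - t)) (ha : a ≤ 0) (hb : 0 ≤ b) (hb2 : b ≤ 2) :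
    ach (graph (ContinuousMap.const I01 a) ∪ graph (ContinuousMap.const I01 b) ∪ graph x) =
      1 + b / 2 - a := by
  have hab := ha.trans hb
  have hp : 0 ≤ 4 - 2 * b := by linarith
  have := ach_eq_of_subset_house hp hab
    (union_subset (union_subset (graph_const_subset_house le_rfl hab hp)
      (graph_const_subset_house hab le_rfl hp))
      (graph_subset_house (c := 0) (k := 4) (by simpa using hx) (by norm_num) ha hb
        (by linarith)))
    (by norm_num [insert_subset_iff, mk_mem_graph_iff, hx]; ring_nf; simp)
  rw [this]
  ring

section Measures

variable {α : Type*} [MeasurableSpace α]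

theorem integral_pi_fin_one (μ : Measure α) [SigmaFinite μ] (g : (Fin 1 → α) → ℝ) :
    ∫ v, g v ∂(Measure.pi fun _ => μ) = ∫ a, g ![a] ∂μ := by
  rw [← (measurePreserving_funUnique μ (Fin 1)).integral_comp']
  congr 1 with v
  congr 1
  ext i
  fin_cases i
  rfl

theorem integral_pi_fin_two (μ : Measure α) [SigmaFinite μ] (g : (Fin 2 → α) → ℝ) :
    ∫ v, g v ∂(Measure.pi fun _ => μ) = ∫ z, g ![z.1, z.2] ∂(μ.prod μ) := by
  rw [← (measurePreserving_finTwoArrow μ).integral_comp']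
  congr 1 with v
  congr 1
  ext i
  fin_cases i <;> rfl

def threePointMeasure (a b c : α) : Measure α :=
  (1/3 : ℝ≥0∞) • (Measure.dirac a + Measure.dirac b + Measure.dirac c)

instance (a b c : α) : IsProbabilityMeasure (threePointMeasure a b c) :=
  ⟨by simp [threePointMeasure, ENNReal.inv_three_add_inv_three]⟩

variable [MeasurableSingletonClass α]

theorem integral_threePointMeasure (f : α → ℝ) (a b c : α) :
    ∫ z, f z ∂(threePointMeasure a b c) = (f a + f b + f c) / 3 := by
  have hf (z : α) : Integrable f (Measure.dirac z) := integrable_dirac enorm_lt_top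
  rw [threePointMeasure, integral_smul_measure,
    integral_add_measure ((hf a).add_measure (hf b)) (hf c), integral_add_measure (hf a) (hf b)]
  simp [integral_dirac]
  ring

theorem integral_prod_threePointMeasure (g : α × α → ℝ) (a b c : α) :
    ∫ z, g z ∂((threePointMeasure a b c).prod (threePointMeasure a b c)) =
      ∫ x, ∫ y, g (x, y) ∂(threePointMeasure a b c) ∂(threePointMeasure a b c) := by
  refine integral_prod g ?_
  simp only [threePointMeasure, Measure.add_prod, Measure.prod_add, Measure.prod_smul_left,
    Measure.prod_smul_right, Measure.dirac_prod_dirac]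
  simp [integrable_add_measure, integrable_smul_measure, integrable_dirac]

end Measures

theorem iUnion_graph_fin_one (u : CI) : ⋃ i, graph (![u] i) = graph u := by
  simp [iUnion_const]

theorem iUnion_graph_fin_two (u v : CI) : ⋃ i, graph (![u, v] i) = graph u ∪ graph v := by
  ext
  simp [Fin.exists_fin_two]

theorem achRatio_fin_two (u v f : CI) :
    achRatio ![u, v] f = ach (graph u ∪ graph v) / ach (graph u ∪ graph v ∪ graph f) := by
  rw [achRatio, iUnion_graph_fin_two]

theorem achRatio_comm (u v f : CI) : achRatio ![u, v] f = achRatio ![v, u] f := by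
  rw [achRatio_fin_two, achRatio_fin_two, union_comm (graph u)]

theorem achRatio_fin_one_eq_zero {u : CI} (hu : ¬ Nonconstant u) (f : CI) :
    achRatio ![u] f = 0 := by
  rw [achRatio, iUnion_graph_fin_one, ach_graph_eq_zero hu, zero_div]

theorem achRatio_self_eq_zero {u : CI} (hu : ¬ Nonconstant u) (f : CI) :
    achRatio ![u, u] f = 0 := by
  rw [achRatio_fin_two, union_self, ach_graph_eq_zero hu, zero_div]

theorem avgACHDepth_two (P : Measure CI) (f : CI) :
    avgACHDepth 2 P f = (ACHDepth 1 P f + ACHDepth 2 P f) / 2 := by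
  rw [avgACHDepth, show Finset.Icc 1 2 = {1, 2} from rfl, Finset.sum_pair (by norm_num)]
  ring

section ConstantAtoms

variable {u v w : CI}

theorem ACHDepth_one_threePointMeasure (hu : ¬ Nonconstant u) (hv : ¬ Nonconstant v)
    (hw : ¬ Nonconstant w) (f : CI) :
    ACHDepth 1 (threePointMeasure u v w) f = 0 := by
  rw [ACHDepth, integral_pi_fin_one, integral_threePointMeasure, achRatio_fin_one_eq_zero hu,
    achRatio_fin_one_eq_zero hv, achRatio_fin_one_eq_zero hw]
  norm_num

theorem ACHDepth_two_threePointMeasure (hu : ¬ Nonconstant u) (hv : ¬ Nonconstant v)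
    (hw : ¬ Nonconstant w) (f : CI) :
    ACHDepth 2 (threePointMeasure u v w) f =
      2 / 9 * (achRatio ![u, v] f + achRatio ![u, w] f + achRatio ![v, w] f) := by
  simp only [ACHDepth, integral_pi_fin_two, integral_prod_threePointMeasure,
    integral_threePointMeasure, achRatio_self_eq_zero hu, achRatio_self_eq_zero hv,
    achRatio_self_eq_zero hw, achRatio_comm v u, achRatio_comm w u, achRatio_comm w v]
  ring

theorem avgACHDepth_two_threePointMeasure (hu : ¬ Nonconstant u) (hv : ¬ Nonconstant v)
    (hw : ¬ Nonconstant w) (f : CI) :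
    avgACHDepth 2 (threePointMeasure u v w) f =
      (achRatio ![u, v] f + achRatio ![u, w] f + achRatio ![v, w] f) / 9 := by
  rw [avgACHDepth_two, ACHDepth_one_threePointMeasure hu hv hw,
    ACHDepth_two_threePointMeasure hu hv hw]
  ring

end ConstantAtoms

theorem norm_eq_of_forall_abs_le {X : Type*} [TopologicalSpace X] [CompactSpace X]
    {f : C(X, ℝ)} {M : ℝ} (hle : ∀ t, |f t| ≤ M) (t₀ : X) (h₀ : |f t₀| = M) : ‖f‖ = M :=
  le_antisymm ((f.norm_le (h₀ ▸ abs_nonneg _)).2 hle) (h₀ ▸ f.norm_coe_le_norm t₀)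

/-- counterexample to 'decreasing w.r.t. the deepest point'. With
`P = (1/3)(δ_{0} + δ_{1} + δ_{−1})` (constant curves), `y ≡ 3/2` and `x` the triangle function
below, one has `min(‖y−z‖, ‖y−x‖) > 0` and `max(‖y−z‖, ‖y−x‖) < ‖x−z‖` (with `z ≡ 0`),
yet `D̄₂(y,P) < D̄₂(x,P)`. -/
theorem ach_depth_not_decreasing (x : CI)
    (hx1 : ∀ s : I01, (s : ℝ) ≤ 1/2 → x s = 4 * (s : ℝ))
    (hx2 : ∀ s : I01, 1/2 ≤ (s : ℝ) → x s = -4 * (s : ℝ) + 4)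
    (P : Measure CI)
    (hPdef : P = (1/3 : ℝ≥0∞) • (Measure.dirac (0 : CI)
      + Measure.dirac (ContinuousMap.const I01 (1 : ℝ))
      + Measure.dirac (ContinuousMap.const I01 (-1 : ℝ)))) :
    0 < min ‖ContinuousMap.const I01 (3/2 : ℝ) - (0 : CI)‖
          ‖ContinuousMap.const I01 (3/2 : ℝ) - x‖ ∧
    max ‖ContinuousMap.const I01 (3/2 : ℝ) - (0 : CI)‖
        ‖ContinuousMap.const I01 (3/2 : ℝ) - x‖ < ‖x - (0 : CI)‖ ∧
    avgACHDepth 2 P (ContinuousMap.const I01 (3/2 : ℝ)) < avgACHDepth 2 P x := by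
  have hx (t : I01) : x t = 4 * min (t : ℝ) (1 - t) := by
    rcases le_total (t : ℝ) (1/2) with h | h
    · rw [hx1 t h, min_eq_left (by linarith)]
    · rw [hx2 t h, min_eq_right (by linarith)]; ring
  have hx_mem (t : I01) : x t ∈ Icc 0 2 := by
    obtain ⟨hm0, hm1⟩ := min_one_sub_mem_Icc t.2
    exact ⟨by linarith [hx t], by linarith [hx t]⟩
  have hy0 : ‖ContinuousMap.const I01 (3/2 : ℝ) - (0 : CI)‖ = 3/2 :=
    norm_eq_of_forall_abs_le (fun _ => by norm_num) ⟨0, by norm_num⟩ (by norm_num)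
  have hyx : ‖ContinuousMap.const I01 (3/2 : ℝ) - x‖ = 3/2 :=
    norm_eq_of_forall_abs_le (fun t => abs_le.2 ⟨by simp; linarith [(hx_mem t).2],
      by simp; linarith [(hx_mem t).1]⟩) ⟨0, by norm_num⟩ (by norm_num [hx])
  have hx0 : ‖x - (0 : CI)‖ = 2 :=
    norm_eq_of_forall_abs_le (fun t => by simpa [abs_of_nonneg (hx_mem t).1] using (hx_mem t).2)
      ⟨1/2, by norm_num⟩ (by norm_num [hx])
  refine ⟨by rw [hy0, hyx]; norm_num, by rw [hy0, hyx, hx0]; norm_num, ?_⟩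
  have hP : P = threePointMeasure (.const I01 0) (.const I01 1) (.const I01 (-1)) := hPdef
  have h0 := not_nonconstant_const 0
  have h1 := not_nonconstant_const 1
  have hm := not_nonconstant_const (-1)
  rw [hP, avgACHDepth_two_threePointMeasure h0 h1 hm, avgACHDepth_two_threePointMeasure h0 h1 hm]
  simp (disch := norm_num) only [achRatio_comm (.const I01 0) (.const I01 (-1)),
    achRatio_comm (.const I01 1) (.const I01 (-1)), achRatio_fin_two, ach_graph_const_union_const,
    ach_graph_const_union_const_union_const, ach_graph_const_union_const_union_tent hx]
  norm_num
end
end
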